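/- arXiv:2205.02215 — 3 statements merged into one kernel-verified Lean document; each statement's English description precedes it below -/
import Mathlib

section
/- Let g : ℝ^{d1} × ℝ^{d2} → ℝ be such that for every x, the map y ↦ g(x,y) is μ-strongly convex and ∇g is ℓ-Lipschitz on ℝ^{d1} × ℝ^{d2}, with μ > 0. Then the inner minimizer map y*(x) = argmin_y g(x,y) is (ℓ/μ)-Lipschitz: ‖y*(x₁) − y*(x₂)‖ ≤ (ℓ/μ)‖x₁ − x₂‖ for all x₁, x₂. -/
/-! Strong convexity makes the partial derivative `∂_y g` strongly monotone:
`μ‖y₁ - y₂‖² ≤ (∂_y g(x₁, y₁) - ∂_y g(x₁, y₂))(y₁ - y₂)`. For `yᵢ = y*(xᵢ)` both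
`∂_y g(xᵢ, yᵢ)` vanish, so the right side equals `(∂_y g(x₂, y₂) - ∂_y g(x₁, y₂))(y₁ - y₂)`,
which is at most `ℓ‖x₁ - x₂‖‖y₁ - y₂‖` because `∂_y g` is the restriction of the full
derivative, an `ℓ`-Lipschitz map. Dividing by `μ‖y₁ - y₂‖` gives the bound. -/

open Set WithLp

section Monotonicity

variable {E : Type*} [NormedAddCommGroup E]

theorem ConvexOn.fderiv_sub_apply_sub_nonneg [NormedSpace ℝ E] {f : E → ℝ}
    (hconv : ConvexOn ℝ univ f) (hf : Differentiable ℝ f) (a b : E) :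
    0 ≤ (fderiv ℝ f a - fderiv ℝ f b) (a - b) := by
  set φ : ℝ → ℝ := f ∘ AffineMap.lineMap b a
  have hφ : ConvexOn ℝ univ φ := by
    simpa using hconv.comp_affineMap (AffineMap.lineMap b a)
  have hderiv (t : ℝ) : HasDerivAt φ (fderiv ℝ f (AffineMap.lineMap b a t) (a - b)) t :=
    (hf _).hasFDerivAt.comp_hasDerivAt t AffineMap.hasDerivAt_lineMap
  have h0 := hφ.le_slope_of_hasDerivAt (mem_univ 0) (mem_univ 1) one_pos (hderiv 0)
  have h1 := hφ.slope_le_of_hasDerivAt (mem_univ 0) (mem_univ 1) one_pos (hderiv 1)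
  simp only [AffineMap.lineMap_apply_zero, AffineMap.lineMap_apply_one] at h0 h1
  simpa using h0.trans h1

theorem StrongConvexOn.mul_norm_sub_sq_le_fderiv_sub_apply_sub [InnerProductSpace ℝ E]
    {f : E → ℝ} {μ : ℝ} (hsc : StrongConvexOn univ μ f) (hf : Differentiable ℝ f) (a b : E) :
    μ * ‖a - b‖ ^ 2 ≤ (fderiv ℝ f a - fderiv ℝ f b) (a - b) := by
  set h : E → ℝ := fun y => f y - μ / 2 * ‖y‖ ^ 2
  have hderiv (y : E) : HasFDerivAt h (fderiv ℝ f y - μ • innerSL ℝ y) y := by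
    refine ((hf y).hasFDerivAt.sub ((hasFDerivAt_id y).norm_sq.const_mul (μ / 2))).congr_fderiv ?_
    ext v
    simp only [ContinuousLinearMap.comp_id, sub_apply, smul_apply, coe_innerSL_apply, id_eq,
      nsmul_eq_mul, Nat.cast_ofNat, smul_eq_mul, sub_right_inj]
    ring
  have hmono := (strongConvexOn_iff_convex.mp hsc).fderiv_sub_apply_sub_nonneg
    (fun y => (hderiv y).differentiableAt) a b
  rw [(hderiv a).fderiv, (hderiv b).fderiv] at hmono
  simp only [sub_apply, FunLike.coe_smul, Pi.smul_apply, innerSL_apply_apply, smul_eq_mul]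
    at hmono ⊢
  rw [← real_inner_self_eq_norm_sq, inner_sub_left]
  linarith

end Monotonicity

theorem dist_toLp_prodMk_right {p : ENNReal} [Fact (1 ≤ p)] {E F : Type*}
    [SeminormedAddCommGroup E] [SeminormedAddCommGroup F] (x₁ x₂ : E) (y : F) :
    dist (toLp p (x₁, y)) (toLp p (x₂, y)) = dist x₁ x₂ := by
  rw [dist_eq_norm, dist_eq_norm, ← toLp_sub, Prod.mk_sub_mk, sub_self, norm_toLp_fst]

section PartialDerivative

variable {p : ENNReal} [Fact (1 ≤ p)] {E F G : Type*} [NormedAddCommGroup E] [NormedSpace ℝ E]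
  [NormedAddCommGroup F] [NormedSpace ℝ F] [NormedAddCommGroup G] [NormedSpace ℝ G]
  {f : WithLp p (E × F) → G}

theorem hasFDerivAt_comp_toLp_prodMk_right {x : E} {y : F}
    (hf : DifferentiableAt ℝ f (toLp p (x, y))) :
    HasFDerivAt (fun y => f (toLp p (x, y))) (fderiv ℝ f (toLp p (x, y)) ∘L
      (prodContinuousLinearEquiv p ℝ E F).symm.toContinuousLinearMap ∘L .inr ℝ E F) y :=
  hf.hasFDerivAt.comp y <|
    (prodContinuousLinearEquiv p ℝ E F).symm.hasFDerivAt.comp y (hasFDerivAt_prodMk_right x y)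

theorem lipschitzWith_fderiv_comp_toLp_prodMk_right (hf : Differentiable ℝ f) {K : NNReal}
    (hlip : LipschitzWith K (fderiv ℝ f)) (y : F) :
    LipschitzWith K fun x => fderiv ℝ (fun y => f (toLp p (x, y))) y := by
  refine LipschitzWith.of_dist_le_mul fun x₁ x₂ => ?_
  rw [(hasFDerivAt_comp_toLp_prodMk_right (hf _)).fderiv,
    (hasFDerivAt_comp_toLp_prodMk_right (hf _)).fderiv, dist_eq_norm,
    ← ContinuousLinearMap.sub_comp]
  calc _ ≤ dist (fderiv ℝ f (toLp p (x₁, y))) (fderiv ℝ f (toLp p (x₂, y))) := by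
        refine ContinuousLinearMap.opNorm_le_bound _ dist_nonneg fun v => ?_
        rw [dist_eq_norm]
        simpa using (fderiv ℝ f (toLp p (x₁, y)) - fderiv ℝ f (toLp p (x₂, y))).le_opNorm
          (toLp p ((0 : E), v))
    _ ≤ K * dist x₁ x₂ := by
        rw [← dist_toLp_prodMk_right (p := p) x₁ x₂ y]
        exact hlip.dist_le_mul _ _

end PartialDerivative

theorem dist_le_of_strongConvexOn_of_fderiv_eq_zero {X Y : Type*} [PseudoMetricSpace X]
    [NormedAddCommGroup Y] [InnerProductSpace ℝ Y] {g : X → Y → ℝ} {ystar : X → Y}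
    {μ : ℝ} {K : NNReal} (hμ : 0 < μ) (hg : ∀ x, Differentiable ℝ (g x))
    (hsc : ∀ x, StrongConvexOn univ μ (g x)) (hcrit : ∀ x, fderiv ℝ (g x) (ystar x) = 0)
    (hlip : ∀ y, LipschitzWith K fun x => fderiv ℝ (g x) y) (x₁ x₂ : X) :
    dist (ystar x₁) (ystar x₂) ≤ K / μ * dist x₁ x₂ := by
  set w := ystar x₁ - ystar x₂
  have hw : μ * ‖w‖ ^ 2 ≤ K * dist x₁ x₂ * ‖w‖ := calc
    μ * ‖w‖ ^ 2 ≤ (fderiv ℝ (g x₁) (ystar x₁) - fderiv ℝ (g x₁) (ystar x₂)) w :=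
      (hsc x₁).mul_norm_sub_sq_le_fderiv_sub_apply_sub (hg x₁) _ _
    _ = (fderiv ℝ (g x₂) (ystar x₂) - fderiv ℝ (g x₁) (ystar x₂)) w := by
      rw [hcrit, hcrit, zero_sub]
    _ ≤ ‖fderiv ℝ (g x₂) (ystar x₂) - fderiv ℝ (g x₁) (ystar x₂)‖ * ‖w‖ :=
      (Real.le_norm_self _).trans (ContinuousLinearMap.le_opNorm _ _)
    _ ≤ K * dist x₁ x₂ * ‖w‖ := by
      gcongr
      rw [← dist_eq_norm, dist_comm]
      exact (hlip _).dist_le_mul _ _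
  rw [dist_eq_norm, div_mul_eq_mul_div, le_div_iff₀ hμ]
  rcases (norm_nonneg w).eq_or_lt with hw0 | hw0
  · rw [← hw0, zero_mul]; positivity
  · nlinarith

/-- Lipschitzness of the inner minimizer: if `y ↦ g x y` is `μ`-strongly convex for
every `x` and the full gradient of `g` (on the Euclidean product space) is
`ℓ`-Lipschitz, then the minimizer map `x ↦ y*(x)` is `(ℓ/μ)`-Lipschitz. -/
theorem inner_minimizer_lipschitz {d1 d2 : ℕ}
    (g : EuclideanSpace ℝ (Fin d1) → EuclideanSpace ℝ (Fin d2) → ℝ)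
    (ystar : EuclideanSpace ℝ (Fin d1) → EuclideanSpace ℝ (Fin d2))
    (μ : ℝ) (ℓ : NNReal) (hμ : 0 < μ)
    (hdiff : Differentiable ℝ
      (fun p : WithLp 2 (EuclideanSpace ℝ (Fin d1) × EuclideanSpace ℝ (Fin d2)) =>
        g (WithLp.equiv 2 _ p).1 (WithLp.equiv 2 _ p).2))
    (hsc : ∀ x, StrongConvexOn Set.univ μ (fun y => g x y))
    (hlip : LipschitzWith ℓ (gradient
      (fun p : WithLp 2 (EuclideanSpace ℝ (Fin d1) × EuclideanSpace ℝ (Fin d2)) =>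
        g (WithLp.equiv 2 _ p).1 (WithLp.equiv 2 _ p).2)))
    (hmin : ∀ x y, g x (ystar x) ≤ g x y) :
    ∀ x₁ x₂, ‖ystar x₁ - ystar x₂‖ ≤ ((ℓ : ℝ) / μ) * ‖x₁ - x₂‖ := by
  set G : WithLp 2 (EuclideanSpace ℝ (Fin d1) × EuclideanSpace ℝ (Fin d2)) → ℝ :=
    fun p => g (WithLp.equiv 2 _ p).1 (WithLp.equiv 2 _ p).2
  have hfderiv : LipschitzWith ℓ (fderiv ℝ G) := by
    rw [← toDual_comp_gradient]
    exact ((InnerProductSpace.toDual ℝ _).isometry.lipschitzWith_iff ℓ).mpr hlip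
  have hg (x) : Differentiable ℝ (g x) := fun y =>
    (hasFDerivAt_comp_toLp_prodMk_right (hdiff (toLp 2 (x, y)))).differentiableAt
  have hcrit (x) : fderiv ℝ (g x) (ystar x) = 0 :=
    IsLocalMin.fderiv_eq_zero (.of_forall (hmin x))
  intro x₁ x₂
  simpa only [dist_eq_norm] using dist_le_of_strongConvexOn_of_fderiv_eq_zero hμ hg hsc hcrit
    (lipschitzWith_fderiv_comp_toLp_prodMk_right hdiff hfderiv) x₁ x₂
end

section
/- Let f : ℝ^{d1} × ℝ^{d2} → ℝ be differentiable, with y ↦ f(x,y) μ-strongly concave for every x, and ∇f ℓ-Lipschitz, μ > 0. Define y*(x) = argmax_y f(x,y) and φ(x) = f(x, y*(x)). Then φ is differentiable with ∇φ(x) = ∇_x f(x, y*(x)). -/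
/-!
Write `y = y*(x)`, `y' = y*(x')` and `φ x = f x (y* x)`. Maximality of `y` and `y'` sandwiches
`f x' y - f x y ≤ φ x' - φ x ≤ f x' y' - f x y'`, and since `∂ₓf` is `ℓ`-Lipschitz, both sides
equal `∂ₓf(x, y) (x' - x)` up to `ℓ ‖x' - x‖ (‖x' - x‖ + ‖y' - y‖)`. Adding the quadratic growth
bounds `f x y' ≤ f x y - μ/4 ‖y' - y‖²` and `f x' y ≤ f x' y' - μ/4 ‖y' - y‖²`, and bounding the
resulting increment of `f · y' - f · y` by the mean value inequality, shows that `y*` is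
`2ℓ/μ`-Lipschitz; so both errors are `O(‖x' - x‖²)`.
-/

open Set Asymptotics Filter Topology InnerProductSpace
open scoped NNReal ENNReal

lemma hasFDerivAt_of_norm_sub_sub_le_sq {E G : Type*} [NormedAddCommGroup E]
    [NormedSpace ℝ E] [NormedAddCommGroup G] [NormedSpace ℝ G] {g : E → G} {g' : E →L[ℝ] G}
    {x : E} {C : ℝ}
    (hg : ∀ x', ‖g x' - g x - g' (x' - x)‖ ≤ C * ‖x' - x‖ ^ 2) :
    HasFDerivAt g g' x := by
  rw [hasFDerivAt_iff_isLittleO_nhds_zero]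
  refine (IsBigO.of_bound C (Eventually.of_forall fun h => ?_)).trans_isLittleO
    (isLittleO_norm_pow_id one_lt_two)
  simpa [Real.norm_eq_abs, abs_of_nonneg (sq_nonneg ‖h‖)] using hg (x + h)

lemma StrongConcaveOn.le_sub_sq_of_forall_le {F : Type*} [NormedAddCommGroup F]
    [NormedSpace ℝ F] {g : F → ℝ} {μ : ℝ} (hg : StrongConcaveOn univ μ g) {y₀ : F}
    (hmax : ∀ y, g y ≤ g y₀) (y : F) :
    g y ≤ g y₀ - μ / 4 * ‖y - y₀‖ ^ 2 := by
  have hconc := hg.2 (mem_univ y₀) (mem_univ y) (by norm_num : (0 : ℝ) ≤ 1 / 2)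
    (by norm_num : (0 : ℝ) ≤ 1 / 2) (by norm_num)
  have hmid := hmax ((1 / 2 : ℝ) • y₀ + (1 / 2 : ℝ) • y)
  rw [norm_sub_rev] at hconc
  simp only [smul_eq_mul] at hconc
  linarith

section Danskin

variable {E F : Type*} [NormedAddCommGroup E] [NormedSpace ℝ E] [NormedAddCommGroup F]
  {f : E → F → ℝ} {f' : E → F → E →L[ℝ] ℝ} {ℓ : ℝ≥0}

lemma abs_sub_sub_partialFDeriv_le (hf : ∀ v w, HasFDerivAt (f · w) (f' v w) v)
    (hL : ∀ v v' w w', ‖f' v w - f' v' w'‖ ≤ ℓ * (‖v - v'‖ + ‖w - w'‖)) (x x' : E) (y w : F) :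
    |f x' w - f x w - f' x y (x' - x)| ≤ ℓ * (‖x' - x‖ + ‖w - y‖) * ‖x' - x‖ := by
  rw [← Real.norm_eq_abs]
  refine (convex_closedBall x ‖x' - x‖).norm_image_sub_le_of_norm_hasFDerivWithin_le'
    (fun v _ => (hf v w).hasFDerivWithinAt) (fun v hv => ?_)
    (Metric.mem_closedBall_self (norm_nonneg _)) (by simp [dist_eq_norm])
  rw [Metric.mem_closedBall, dist_eq_norm] at hv
  exact (hL v x w y).trans (by gcongr)

lemma norm_argmax_sub_le_of_strongConcaveOn [NormedSpace ℝ F] {μ : ℝ} (hμ : 0 < μ)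
    (hf : ∀ v w, HasFDerivAt (f · w) (f' v w) v)
    (hL : ∀ v v' w w', ‖f' v w - f' v' w'‖ ≤ ℓ * (‖v - v'‖ + ‖w - w'‖))
    (hsc : ∀ x, StrongConcaveOn univ μ (f x)) {ystar : E → F}
    (hmax : ∀ x y, f x y ≤ f x (ystar x)) (x x' : E) :
    ‖ystar x' - ystar x‖ ≤ 2 * ℓ / μ * ‖x' - x‖ := by
  set r := ‖ystar x' - ystar x‖
  set s := ‖x' - x‖
  have growth := (hsc x).le_sub_sq_of_forall_le (hmax x) (ystar x')
  have growth' := (hsc x').le_sub_sq_of_forall_le (hmax x') (ystar x)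
  rw [norm_sub_rev] at growth'
  have mean_value : ‖(f x' (ystar x') - f x' (ystar x)) - (f x (ystar x') - f x (ystar x))‖
      ≤ ℓ * r * s := by
    refine convex_univ.norm_image_sub_le_of_norm_hasFDerivWithin_le
      (f := fun v => f v (ystar x') - f v (ystar x))
      (fun v _ => ((hf v _).sub (hf v _)).hasFDerivWithinAt) (fun v _ => ?_)
      (mem_univ x) (mem_univ x')
    simpa using hL v v (ystar x') (ystar x)
  rw [Real.norm_eq_abs, abs_le] at mean_value
  have hquad : μ * r * r ≤ 2 * ℓ * s * r := by nlinarith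
  rw [div_mul_eq_mul_div, le_div_iff₀ hμ]
  rcases (show 0 ≤ r from norm_nonneg _).eq_or_lt with hr | hr
  · rw [← hr, zero_mul]; positivity
  · nlinarith

theorem hasFDerivAt_max_of_strongConcaveOn [NormedSpace ℝ F] {μ : ℝ} (hμ : 0 < μ)
    (hf : ∀ v w, HasFDerivAt (f · w) (f' v w) v)
    (hL : ∀ v v' w w', ‖f' v w - f' v' w'‖ ≤ ℓ * (‖v - v'‖ + ‖w - w'‖))
    (hsc : ∀ x, StrongConcaveOn univ μ (f x)) {ystar : E → F}
    (hmax : ∀ x y, f x y ≤ f x (ystar x)) (x : E) :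
    HasFDerivAt (fun x => f x (ystar x)) (f' x (ystar x)) x := by
  refine hasFDerivAt_of_norm_sub_sub_le_sq (C := ℓ * (1 + 2 * ℓ / μ)) fun x' => ?_
  have lower := abs_sub_sub_partialFDeriv_le hf hL x x' (ystar x) (ystar x)
  have upper := abs_sub_sub_partialFDeriv_le hf hL x x' (ystar x) (ystar x')
  set s := ‖x' - x‖
  have hy : ℓ * (s + ‖ystar x' - ystar x‖) * s ≤ ℓ * (1 + 2 * ℓ / μ) * s ^ 2 :=
    calc ℓ * (s + ‖ystar x' - ystar x‖) * s ≤ ℓ * (s + 2 * ℓ / μ * s) * s := by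
          gcongr; exact norm_argmax_sub_le_of_strongConcaveOn hμ hf hL hsc hmax x x'
      _ = ℓ * (1 + 2 * ℓ / μ) * s ^ 2 := by ring
  have hx := hmax x (ystar x')
  have hx' := hmax x' (ystar x)
  rw [sub_self, norm_zero, add_zero] at lower
  rw [Real.norm_eq_abs, abs_le]
  rw [abs_le] at lower upper
  have hlower : ℓ * s * s ≤ ℓ * (1 + 2 * ℓ / μ) * s ^ 2 := by
    have : 0 ≤ 2 * ℓ / μ := by positivity
    nlinarith [mul_nonneg (mul_nonneg ℓ.2 this) (sq_nonneg s)]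
  constructor <;> linarith

end Danskin

section WithLpProd

variable {E F : Type*} [NormedAddCommGroup E] [NormedAddCommGroup F]

lemma WithLp.norm_toLp_le_add (p : ℝ≥0∞) [Fact (1 ≤ p)] (v : E) (w : F) :
    ‖WithLp.toLp p (v, w)‖ ≤ ‖v‖ + ‖w‖ := by
  have hsplit : WithLp.toLp p (v, w) = WithLp.toLp p (v, 0) + WithLp.toLp p (0, w) := by
    rw [← WithLp.toLp_add, Prod.mk_add_mk, add_zero, zero_add]
  rw [hsplit]
  exact (norm_add_le _ _).trans_eq (by rw [WithLp.norm_toLp_fst, WithLp.norm_toLp_snd])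

variable [NormedSpace ℝ E] [NormedSpace ℝ F] (p : ℝ≥0∞)

noncomputable def WithLp.inlL : E →L[ℝ] WithLp p (E × F) :=
  (WithLp.prodContinuousLinearEquiv p ℝ E F).symm.toContinuousLinearMap.comp
    (ContinuousLinearMap.inl ℝ E F)

lemma WithLp.inlL_apply (v : E) : WithLp.inlL (F := F) p v = WithLp.toLp p (v, 0) := rfl

lemma WithLp.norm_inlL_le [Fact (1 ≤ p)] : ‖WithLp.inlL (E := E) (F := F) p‖ ≤ 1 :=
  ContinuousLinearMap.opNorm_le_bound _ zero_le_one fun v => by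
    rw [WithLp.inlL_apply, WithLp.norm_toLp_fst, one_mul]

variable {p} [Fact (1 ≤ p)]

lemma HasFDerivAt.comp_toLp_left {G : Type*} [NormedAddCommGroup G] [NormedSpace ℝ G]
    {g : WithLp p (E × F) → G} {g' : WithLp p (E × F) →L[ℝ] G} {v : E} {w : F}
    (hg : HasFDerivAt g g' (WithLp.toLp p (v, w))) :
    HasFDerivAt (fun v => g (WithLp.toLp p (v, w))) (g'.comp (WithLp.inlL p)) v := by
  have hshift : (fun v => WithLp.toLp p (v, w)) =
      fun v => WithLp.inlL p v + WithLp.toLp p ((0 : E), w) := by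
    funext v
    rw [WithLp.inlL_apply, ← WithLp.toLp_add, Prod.mk_add_mk, add_zero, zero_add]
  have hinner : HasFDerivAt (fun v => WithLp.toLp p (v, w)) (WithLp.inlL p) v := by
    rw [hshift]
    exact (WithLp.inlL p).hasFDerivAt.add_const _
  exact hg.comp v hinner

end WithLpProd

section Gradient

variable {E F : Type*} [NormedAddCommGroup E] [InnerProductSpace ℝ E] [CompleteSpace E]
  [NormedAddCommGroup F] [InnerProductSpace ℝ F] [CompleteSpace F]

lemma norm_fderiv_comp_inlL_sub_le {g : WithLp 2 (E × F) → ℝ} {ℓ : ℝ≥0}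
    (hg : LipschitzWith ℓ (gradient g)) (v v' : E) (w w' : F) :
    ‖(fderiv ℝ g (WithLp.toLp 2 (v, w))).comp (WithLp.inlL 2)
        - (fderiv ℝ g (WithLp.toLp 2 (v', w'))).comp (WithLp.inlL 2)‖
      ≤ ℓ * (‖v - v'‖ + ‖w - w'‖) := by
  have hfderiv : ∀ q, fderiv ℝ g q = toDual ℝ _ (gradient g q) := fun q =>
    ((toDual ℝ _).apply_symm_apply _).symm
  calc _ = ‖(fderiv ℝ g (WithLp.toLp 2 (v, w)) - fderiv ℝ g (WithLp.toLp 2 (v', w'))).comp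
          (WithLp.inlL 2)‖ := by rw [ContinuousLinearMap.sub_comp]
    _ ≤ ‖fderiv ℝ g (WithLp.toLp 2 (v, w)) - fderiv ℝ g (WithLp.toLp 2 (v', w'))‖ :=
        (ContinuousLinearMap.opNorm_comp_le _ _).trans
          (mul_le_of_le_one_right (norm_nonneg _) (WithLp.norm_inlL_le 2))
    _ = ‖gradient g (WithLp.toLp 2 (v, w)) - gradient g (WithLp.toLp 2 (v', w'))‖ := by
        rw [hfderiv, hfderiv, ← map_sub, LinearIsometryEquiv.norm_map]
    _ ≤ ℓ * ‖WithLp.toLp 2 (v, w) - WithLp.toLp 2 (v', w')‖ := hg.norm_sub_le _ _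
    _ ≤ ℓ * (‖v - v'‖ + ‖w - w'‖) := by
        rw [← WithLp.toLp_sub, Prod.mk_sub_mk]
        gcongr
        exact WithLp.norm_toLp_le_add 2 _ _

end Gradient

/-- Danskin-type theorem for strongly-concave maximization: if `y ↦ f x y` is
`μ`-strongly concave for every `x`, `f` is differentiable with `ℓ`-Lipschitz
gradient, and `y*(x)` maximizes `f x ·`, then `φ(x) = f(x, y*(x))` is
differentiable with `∇φ(x) = ∇_x f(x, y*(x))`. -/
theorem danskin_strongly_concave {d1 d2 : ℕ}
    (f : EuclideanSpace ℝ (Fin d1) → EuclideanSpace ℝ (Fin d2) → ℝ)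
    (ystar : EuclideanSpace ℝ (Fin d1) → EuclideanSpace ℝ (Fin d2))
    (μ : ℝ) (ℓ : NNReal) (hμ : 0 < μ)
    (hdiff : Differentiable ℝ
      (fun p : WithLp 2 (EuclideanSpace ℝ (Fin d1) × EuclideanSpace ℝ (Fin d2)) =>
        f (WithLp.equiv 2 _ p).1 (WithLp.equiv 2 _ p).2))
    (hlip : LipschitzWith ℓ (gradient
      (fun p : WithLp 2 (EuclideanSpace ℝ (Fin d1) × EuclideanSpace ℝ (Fin d2)) =>
        f (WithLp.equiv 2 _ p).1 (WithLp.equiv 2 _ p).2)))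
    (hsc : ∀ x, StrongConcaveOn Set.univ μ (fun y => f x y))
    (hmax : ∀ x y, f x y ≤ f x (ystar x)) :
    ∀ x, HasGradientAt (fun x' => f x' (ystar x'))
      (gradient (fun x' => f x' (ystar x)) x) x := by
  intro x
  have hpartial : ∀ v w, HasFDerivAt (f · w)
      ((fderiv ℝ _ (WithLp.toLp 2 (v, w))).comp (WithLp.inlL 2)) v :=
    fun v w => (hdiff _).hasFDerivAt.comp_toLp_left
  rw [(hpartial x (ystar x)).hasGradientAt.gradient]
  exact (hasFDerivAt_max_of_strongConcaveOn hμ hpartial (norm_fderiv_comp_inlL_sub_le hlip)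
    hsc hmax x).hasGradientAt
end

section
/- Let f : ℝ^{d1} × ℝ^{d2} → ℝ have ∇f ℓ-Lipschitz and y ↦ f(x,y) μ-strongly concave for every x (μ > 0, κ := ℓ/μ). Then φ(x) = max_y f(x,y) has (ℓ(1 + κ))-Lipschitz gradient: ‖∇φ(x₁) − ∇φ(x₂)‖ ≤ ℓ(1 + ℓ/μ)‖x₁ − x₂‖ for all x₁, x₂. -/
/-!
Strong concavity turns the maximality of `y*(a)` and `y*(b)` into two quadratic gaps, so that
`μ ‖y*(a) - y*(b)‖²` is at most the increment of `f a - f b` from `y*(b)` to `y*(a)`; the mean value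
inequality bounds it by `ℓ ‖a - b‖ ‖y*(a) - y*(b)‖`, so `y*` is `ℓ/μ`-Lipschitz. Danskin's theorem
`∇φ(x) = ∇ₓf(x, y*(x))` follows by sandwiching `φ(x') - φ(x)` between increments of `f(·, y*(x))`
and `f(·, y*(x'))`. Since `∇ₓf` is `ℓ`-Lipschitz in each argument, `x ↦ ∇ₓf(x, y*(x))` is
`ℓ (1 + ℓ/μ)`-Lipschitz.
-/

open InnerProductSpace Filter Topology Set Asymptotics WithLp
open scoped NNReal ENNReal

theorem StrongConcaveOn.le_sub_of_isMaxOn {E : Type*} [NormedAddCommGroup E] [NormedSpace ℝ E]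
    {s : Set E} {μ : ℝ} {h : E → ℝ} {y₀ y : E}
    (hh : StrongConcaveOn s μ h) (hmax : IsMaxOn h s y₀) (hy₀ : y₀ ∈ s) (hy : y ∈ s) :
    h y ≤ h y₀ - μ / 2 * ‖y - y₀‖ ^ 2 := by
  set c := μ / 2 * ‖y - y₀‖ ^ 2
  have hsmall : ∀ t ∈ Ioo (0 : ℝ) 1, h y - h y₀ + (1 - t) * c ≤ 0 := by
    rintro t ⟨ht₀, ht₁⟩
    have hconc := hh.2 hy hy₀ ht₀.le (sub_nonneg.2 ht₁.le) (add_sub_cancel t 1)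
    have hle : h (t • y + (1 - t) • y₀) ≤ h y₀ :=
      hmax (hh.1 hy hy₀ ht₀.le (sub_nonneg.2 ht₁.le) (add_sub_cancel t 1))
    simp only [smul_eq_mul] at hconc
    have : t * (h y - h y₀ + (1 - t) * c) ≤ 0 := by linear_combination hconc + hle
    exact nonpos_of_mul_nonpos_right this ht₀
  have hlim : Tendsto (fun t : ℝ => h y - h y₀ + (1 - t) * c) (𝓝[>] 0) (𝓝 (h y - h y₀ + c)) := by
    have : Continuous fun t : ℝ => h y - h y₀ + (1 - t) * c := by fun_prop
    simpa using this.continuousWithinAt (s := Ioi 0) (x := 0) |>.tendsto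
  have := le_of_tendsto hlim (by filter_upwards [Ioo_mem_nhdsGT zero_lt_one] using hsmall)
  linarith

theorem lipschitzWith_comp_graph {α β γ : Type*} [PseudoMetricSpace α] [PseudoMetricSpace β]
    [PseudoMetricSpace γ] {g : α → β → γ} {h : α → β} {L K : ℝ≥0}
    (hg₁ : ∀ y, LipschitzWith L (g · y)) (hg₂ : ∀ x, LipschitzWith L (g x))
    (hh : LipschitzWith K h) : LipschitzWith (L * (1 + K)) fun x => g x (h x) := by
  refine .of_dist_le_mul fun a b => ?_
  calc dist (g a (h a)) (g b (h b))
        ≤ dist (g a (h a)) (g b (h a)) + dist (g b (h a)) (g b (h b)) := dist_triangle _ _ _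
    _ ≤ L * dist a b + L * (K * dist a b) :=
        add_le_add ((hg₁ _).dist_le_mul a b)
          (((hg₂ b).dist_le_mul _ _).trans (by gcongr; exact hh.dist_le_mul a b))
    _ = ↑(L * (1 + K)) * dist a b := by push_cast; ring

theorem LipschitzWith.precomp {𝕜 X E P G : Type*} [NontriviallyNormedField 𝕜]
    [PseudoMetricSpace X] [NormedAddCommGroup E] [NormedSpace 𝕜 E] [NormedAddCommGroup P]
    [NormedSpace 𝕜 P] [NormedAddCommGroup G] [NormedSpace 𝕜 G] {D : X → P →L[𝕜] G} {L : ℝ≥0}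
    (hD : LipschitzWith L D) {J : E →L[𝕜] P} (hJ : ‖J‖ ≤ 1) :
    LipschitzWith L fun x => D x ∘L J :=
  .of_dist_le_mul fun a b => by
    rw [dist_eq_norm, ← ContinuousLinearMap.sub_comp]
    calc ‖(D a - D b) ∘L J‖ ≤ ‖D a - D b‖ * ‖J‖ := ContinuousLinearMap.opNorm_comp_le _ _
      _ ≤ ‖D a - D b‖ := mul_le_of_le_one_right (norm_nonneg _) hJ
      _ ≤ L * dist a b := by simpa [dist_eq_norm] using hD.dist_le_mul a b

theorem hasFDerivAt_of_norm_sub_le_sq {𝕜 E F : Type*} [NontriviallyNormedField 𝕜]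
    [NormedAddCommGroup E] [NormedSpace 𝕜 E] [NormedAddCommGroup F] [NormedSpace 𝕜 F]
    {g : E → F} {g' : E →L[𝕜] F} {x : E} {C : ℝ}
    (h : ∀ x', ‖g x' - g x - g' (x' - x)‖ ≤ C * ‖x' - x‖ ^ 2) : HasFDerivAt g g' x :=
  .of_isLittleO <|
    (IsBigO.of_bound C (Eventually.of_forall fun x' => by simpa using h x')).trans_isLittleO
      (isLittleO_pow_sub_sub x one_lt_two)

theorem norm_sub_sub_le_of_lipschitzWith_fderiv {E G : Type*} [NormedAddCommGroup E]
    [NormedSpace ℝ E] [NormedAddCommGroup G] [NormedSpace ℝ G] {g : E → G}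
    {g' : E → E →L[ℝ] G} {L : ℝ≥0} (hg : ∀ x, HasFDerivAt g (g' x) x) (hg' : LipschitzWith L g')
    (x x' : E) : ‖g x' - g x - g' x (x' - x)‖ ≤ L * ‖x' - x‖ ^ 2 := by
  have hbound : ∀ u ∈ Metric.closedBall x ‖x' - x‖, ‖g' u - g' x‖ ≤ L * ‖x' - x‖ := fun u hu =>
    calc ‖g' u - g' x‖ ≤ L * ‖u - x‖ := by simpa [dist_eq_norm] using hg'.dist_le_mul u x
      _ ≤ L * ‖x' - x‖ := by gcongr; exact mem_closedBall_iff_norm.1 hu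
  calc ‖g x' - g x - g' x (x' - x)‖ ≤ L * ‖x' - x‖ * ‖x' - x‖ :=
        (convex_closedBall x _).norm_image_sub_le_of_norm_hasFDerivWithin_le'
          (fun u _ => (hg u).hasFDerivWithinAt) hbound
          (Metric.mem_closedBall_self (norm_nonneg _)) (mem_closedBall_iff_norm.2 le_rfl)
    _ = L * ‖x' - x‖ ^ 2 := by ring

theorem lipschitzWith_argmax {E F : Type*} [PseudoMetricSpace E] [NormedAddCommGroup F]
    [NormedSpace ℝ F] {f : E → F → ℝ} {ystar : E → F} {μ L : ℝ≥0} {f₂ : E → F → F →L[ℝ] ℝ}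
    (hμ : 0 < μ) (hf₂ : ∀ x y, HasFDerivAt (f x) (f₂ x y) y)
    (hf₂x : ∀ y, LipschitzWith L (f₂ · y)) (hsc : ∀ x, StrongConcaveOn univ μ (f x))
    (hmax : ∀ x y, f x y ≤ f x (ystar x)) : LipschitzWith (L / μ) ystar := by
  refine .of_dist_le_mul fun a b => ?_
  rw [dist_eq_norm, NNReal.coe_div, div_mul_eq_mul_div, le_div_iff₀ (NNReal.coe_pos.2 hμ)]
  have gap (x : E) (y : F) : f x y ≤ f x (ystar x) - μ / 2 * ‖y - ystar x‖ ^ 2 :=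
    (hsc x).le_sub_of_isMaxOn (fun y _ => hmax x y) (mem_univ _) (mem_univ y)
  have gap_a := gap a (ystar b)
  have gap_b := gap b (ystar a)
  rw [norm_sub_rev] at gap_a
  set D := ‖ystar a - ystar b‖
  have hincr : (f a (ystar a) - f b (ystar a)) - (f a (ystar b) - f b (ystar b)) ≤
      L * dist a b * D :=
    (Real.le_norm_self _).trans <| convex_univ.norm_image_sub_le_of_norm_hasFDerivWithin_le
      (fun y _ => ((hf₂ a y).sub (hf₂ b y)).hasFDerivWithinAt)
      (fun y _ => by simpa [dist_eq_norm] using (hf₂x y).dist_le_mul a b)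
      (mem_univ (ystar b)) (mem_univ (ystar a))
  have hμD : μ * D ^ 2 ≤ L * dist a b * D := by linarith
  rcases (show 0 ≤ D from norm_nonneg _).eq_or_lt with hD | hD
  · rw [← hD, zero_mul]; positivity
  · exact le_of_mul_le_mul_left (by linear_combination hμD) hD

theorem hasFDerivAt_comp_argmax {E F : Type*} [NormedAddCommGroup E] [NormedSpace ℝ E]
    [PseudoMetricSpace F] {f : E → F → ℝ} {ystar : E → F} {L K : ℝ≥0} {f₁ : E → F → E →L[ℝ] ℝ}
    (hf₁ : ∀ x y, HasFDerivAt (f · y) (f₁ x y) x) (hf₁x : ∀ y, LipschitzWith L (f₁ · y))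
    (hf₁y : ∀ x, LipschitzWith L (f₁ x)) (hmax : ∀ x y, f x y ≤ f x (ystar x))
    (hy : LipschitzWith K ystar) (x : E) :
    HasFDerivAt (fun x => f x (ystar x)) (f₁ x (ystar x)) x := by
  refine hasFDerivAt_of_norm_sub_le_sq (C := L * (1 + K)) fun x' => ?_
  set y := ystar x
  set y' := ystar x'
  have hlow := norm_sub_sub_le_of_lipschitzWith_fderiv (hf₁ · y) (hf₁x y) x x'
  have hup := norm_sub_sub_le_of_lipschitzWith_fderiv (hf₁ · y') (hf₁x y') x x'
  have hcross : ‖f₁ x y' (x' - x) - f₁ x y (x' - x)‖ ≤ L * K * ‖x' - x‖ ^ 2 :=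
    calc ‖f₁ x y' (x' - x) - f₁ x y (x' - x)‖ ≤ ‖f₁ x y' - f₁ x y‖ * ‖x' - x‖ :=
          ContinuousLinearMap.le_opNorm (f₁ x y' - f₁ x y) _
      _ ≤ L * (K * ‖x' - x‖) * ‖x' - x‖ := by
        gcongr
        simpa [dist_eq_norm] using ((hf₁y x).dist_le_mul y' y).trans
          (by gcongr; simpa [dist_eq_norm] using hy.dist_le_mul x' x)
      _ = L * K * ‖x' - x‖ ^ 2 := by ring
  simp only [Real.norm_eq_abs, abs_le] at hlow hup hcross ⊢
  have hLK : 0 ≤ L * K * ‖x' - x‖ ^ 2 := by positivity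
  -- `f x' y ≤ f x' y'` and `f x y' ≤ f x y` sandwich the increment of the max function
  constructor <;> linarith [hmax x' y, hmax x y', hlow.1, hup.2, hcross.2]

namespace WithLp

section

variable (p : ℝ≥0∞) (𝕜 α β : Type*) [Semiring 𝕜] [TopologicalSpace α] [TopologicalSpace β]
  [AddCommGroup α] [AddCommGroup β] [Module 𝕜 α] [Module 𝕜 β]

def inlL_s17 : α →L[𝕜] WithLp p (α × β) :=
  (prodContinuousLinearEquiv p 𝕜 α β).symm.toContinuousLinearMap ∘L .inl 𝕜 α β

def inrL : β →L[𝕜] WithLp p (α × β) :=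
  (prodContinuousLinearEquiv p 𝕜 α β).symm.toContinuousLinearMap ∘L .inr 𝕜 α β

end

variable {p : ℝ≥0∞} [Fact (1 ≤ p)] {𝕜 α β G : Type*} [NontriviallyNormedField 𝕜]
  [NormedAddCommGroup α] [NormedSpace 𝕜 α] [NormedAddCommGroup β] [NormedSpace 𝕜 β]
  [NormedAddCommGroup G] [NormedSpace 𝕜 G]

theorem norm_inlL_le_s17 : ‖inlL_s17 p 𝕜 α β‖ ≤ 1 :=
  ContinuousLinearMap.opNorm_le_bound _ zero_le_one fun x => by simp [inlL_s17, norm_toLp_fst]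

theorem norm_inrL_le : ‖inrL p 𝕜 α β‖ ≤ 1 :=
  ContinuousLinearMap.opNorm_le_bound _ zero_le_one fun y => by simp [inrL, norm_toLp_snd]

theorem isometry_toLp_prodMk_left (y : β) : Isometry fun x : α => toLp p (x, y) :=
  .of_dist_eq fun x₁ x₂ => by
    rw [dist_eq_norm, dist_eq_norm, ← toLp_sub, Prod.mk_sub_mk, sub_self, norm_toLp_fst]

theorem isometry_toLp_prodMk_right (x : α) : Isometry fun y : β => toLp p (x, y) :=
  .of_dist_eq fun y₁ y₂ => by
    rw [dist_eq_norm, dist_eq_norm, ← toLp_sub, Prod.mk_sub_mk, sub_self, norm_toLp_snd]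

theorem _root_.HasFDerivAt.comp_toLp_left_s17 {Φ : WithLp p (α × β) → G}
    {D : WithLp p (α × β) →L[𝕜] G} {x : α} {y : β} (h : HasFDerivAt Φ D (toLp p (x, y))) :
    HasFDerivAt (fun x' => Φ (toLp p (x', y))) (D ∘L inlL_s17 p 𝕜 α β) x :=
  h.comp x <| (prodContinuousLinearEquiv p 𝕜 α β).symm.hasFDerivAt.comp x
    (hasFDerivAt_prodMk_left x y)

theorem _root_.HasFDerivAt.comp_toLp_right {Φ : WithLp p (α × β) → G}
    {D : WithLp p (α × β) →L[𝕜] G} {x : α} {y : β} (h : HasFDerivAt Φ D (toLp p (x, y))) :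
    HasFDerivAt (fun y' => Φ (toLp p (x, y'))) (D ∘L inrL p 𝕜 α β) y :=
  h.comp y <| (prodContinuousLinearEquiv p 𝕜 α β).symm.hasFDerivAt.comp y
    (hasFDerivAt_prodMk_right x y)

end WithLp

/-- Smoothness of the max-function: if `f` has `ℓ`-Lipschitz gradient and
`y ↦ f x y` is `μ`-strongly concave for every `x` (`κ = ℓ/μ`), then
`φ(x) = max_y f(x,y) = f(x, y*(x))` has `ℓ(1 + κ)`-Lipschitz gradient. -/
theorem max_function_gradient_lipschitz {d1 d2 : ℕ}
    (f : EuclideanSpace ℝ (Fin d1) → EuclideanSpace ℝ (Fin d2) → ℝ)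
    (ystar : EuclideanSpace ℝ (Fin d1) → EuclideanSpace ℝ (Fin d2))
    (μ : ℝ) (ℓ : NNReal) (hμ : 0 < μ)
    (hdiff : Differentiable ℝ
      (fun p : WithLp 2 (EuclideanSpace ℝ (Fin d1) × EuclideanSpace ℝ (Fin d2)) =>
        f (WithLp.equiv 2 _ p).1 (WithLp.equiv 2 _ p).2))
    (hlip : LipschitzWith ℓ (gradient
      (fun p : WithLp 2 (EuclideanSpace ℝ (Fin d1) × EuclideanSpace ℝ (Fin d2)) =>
        f (WithLp.equiv 2 _ p).1 (WithLp.equiv 2 _ p).2)))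
    (hsc : ∀ x, StrongConcaveOn Set.univ μ (fun y => f x y))
    (hmax : ∀ x y, f x y ≤ f x (ystar x)) :
    ∀ x₁ x₂, ‖gradient (fun x => f x (ystar x)) x₁ - gradient (fun x => f x (ystar x)) x₂‖ ≤
      (ℓ : ℝ) * (1 + (ℓ : ℝ) / μ) * ‖x₁ - x₂‖ := by
  lift μ to ℝ≥0 using hμ.le
  set Φ := fun p : WithLp 2 (EuclideanSpace ℝ (Fin d1) × EuclideanSpace ℝ (Fin d2)) =>
    f (WithLp.equiv 2 _ p).1 (WithLp.equiv 2 _ p).2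
  have hΦ : LipschitzWith ℓ (fderiv ℝ Φ) := by
    rw [← toDual_comp_gradient]
    exact ((toDual ℝ _).isometry.lipschitzWith_iff ℓ).2 hlip
  set f₁ := fun x y => fderiv ℝ Φ (toLp 2 (x, y)) ∘L inlL_s17 2 ℝ _ _
  set f₂ := fun x y => fderiv ℝ Φ (toLp 2 (x, y)) ∘L inrL 2 ℝ _ _
  have hf₁ (x y) : HasFDerivAt (f · y) (f₁ x y) x := (hdiff _).hasFDerivAt.comp_toLp_left_s17
  have hf₂ (x y) : HasFDerivAt (f x) (f₂ x y) y := (hdiff _).hasFDerivAt.comp_toLp_right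
  have hf₁x (y) : LipschitzWith ℓ (f₁ · y) := by
    rw [← mul_one ℓ]
    exact (hΦ.precomp norm_inlL_le_s17).comp (isometry_toLp_prodMk_left y).lipschitz
  have hf₁y (x) : LipschitzWith ℓ (f₁ x) := by
    rw [← mul_one ℓ]
    exact (hΦ.precomp norm_inlL_le_s17).comp (isometry_toLp_prodMk_right x).lipschitz
  have hf₂x (y) : LipschitzWith ℓ (f₂ · y) := by
    rw [← mul_one ℓ]
    exact (hΦ.precomp norm_inrL_le).comp (isometry_toLp_prodMk_left y).lipschitz
  have hy : LipschitzWith (ℓ / μ) ystar :=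
    lipschitzWith_argmax (by exact_mod_cast hμ) hf₂ hf₂x hsc hmax
  have hφ (x) := hasFDerivAt_comp_argmax hf₁ hf₁x hf₁y hmax hy x
  intro x₁ x₂
  simp only [gradient, (hφ _).fderiv, ← map_sub, LinearIsometryEquiv.norm_map]
  simpa [dist_eq_norm] using (lipschitzWith_comp_graph hf₁x hf₁y hy).dist_le_mul x₁ x₂
end
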